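/- arXiv:2510.14311 — 2 statements merged into one kernel-verified Lean document; each statement's English description precedes it below -/
import Mathlib

section
/- Let p > 1 and let A, B, C, D be real numbers with A + B + C + D = 0. If A < 0, pA + (p−1)B + C ≤ 0, and pA + (p−2)B ≤ 0, then for every τ > 1 one has A(τ^p − 1)/(τ−1) + B(τ^{p−1} − 1)/(τ−1) + C < 0. -/
/-!
Multiplying by `τ - 1 > 0`, it suffices that `f t = A (t^p - 1) + B (t^(p-1) - 1) + C (t - 1)`
is negative for `t > 1`. Since `f 1 = 0`, it suffices that `f' t = p A t^(p-1) + (p-1) B t^(p-2) + C`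
is negative there; since `f' 1 = p A + (p-1) B + C ≤ 0`, it suffices that
`f'' t = (p-1) t^(p-3) (p A t + (p-2) B)` is negative, and `p A t + (p-2) B < p A + (p-2) B ≤ 0`
because `A < 0`.
-/

open Set

theorem neg_of_hasDerivAt_neg {f f' : ℝ → ℝ} {a : ℝ}
    (hf : ∀ x ∈ Ici a, HasDerivAt f (f' x) x) (hf' : ∀ x ∈ Ioi a, f' x < 0) (ha : f a ≤ 0) :
    ∀ x ∈ Ioi a, f x < 0 := by
  have hanti : StrictAntiOn f (Ici a) := by
    refine strictAntiOn_of_hasDerivWithinAt_neg (f' := f') (convex_Ici a)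
      (fun x hx => (hf x hx).continuousAt.continuousWithinAt) ?_ ?_ <;> rw [interior_Ici]
    · exact fun x hx => (hf x (mem_Ici_of_Ioi hx)).hasDerivWithinAt
    · exact hf'
  intro x hx
  exact (hanti self_mem_Ici (mem_Ici_of_Ioi hx) hx).trans_le ha

section

variable (p A B C : ℝ)

noncomputable def I1Numerator (t : ℝ) : ℝ :=
  A * (t ^ p - 1) + B * (t ^ (p - 1) - 1) + C * (t - 1)

noncomputable def I1NumeratorDeriv (t : ℝ) : ℝ :=
  p * A * t ^ (p - 1) + (p - 1) * B * t ^ (p - 2) + C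

theorem hasDerivAt_I1Numerator {t : ℝ} (ht : 0 < t) :
    HasDerivAt (I1Numerator p A B C) (I1NumeratorDeriv p A B C t) t := by
  have hp := Real.hasDerivAt_rpow_const (p := p) (Or.inl ht.ne')
  have hp1 := Real.hasDerivAt_rpow_const (p := p - 1) (Or.inl ht.ne')
  refine ((((hp.sub_const 1).const_mul A).add ((hp1.sub_const 1).const_mul B)).add
    (((hasDerivAt_id t).sub_const 1).const_mul C)).congr_deriv ?_
  rw [I1NumeratorDeriv, show p - 1 - 1 = p - 2 by ring]
  ring

theorem hasDerivAt_I1NumeratorDeriv {t : ℝ} (ht : 0 < t) :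
    HasDerivAt (I1NumeratorDeriv p A B C) ((p - 1) * t ^ (p - 3) * (p * A * t + (p - 2) * B)) t := by
  have hp1 := Real.hasDerivAt_rpow_const (p := p - 1) (Or.inl ht.ne')
  have hp2 := Real.hasDerivAt_rpow_const (p := p - 2) (Or.inl ht.ne')
  refine (((hp1.const_mul (p * A)).add (hp2.const_mul ((p - 1) * B))).add_const C).congr_deriv ?_
  rw [show p - 1 - 1 = p - 3 + 1 by ring, show p - 2 - 1 = p - 3 by ring,
    Real.rpow_add_one ht.ne']
  ring

end

theorem I1_neg_general (p A B C : ℝ) (hp : 1 < p)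
    (hA : A < 0) (hB : p * A + (p - 1) * B + C ≤ 0) (hC : p * A + (p - 2) * B ≤ 0) :
    ∀ τ : ℝ, 1 < τ →
      A * (τ ^ p - 1) / (τ - 1) + B * (τ ^ (p - 1) - 1) / (τ - 1) + C < 0 := by
  intro τ hτ
  have hpos : ∀ t ∈ Ici (1 : ℝ), 0 < t := fun t ht => one_pos.trans_le ht
  have hderiv_neg : ∀ t ∈ Ioi (1 : ℝ), I1NumeratorDeriv p A B C t < 0 := by
    refine neg_of_hasDerivAt_neg (fun t ht => hasDerivAt_I1NumeratorDeriv p A B C (hpos t ht))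
      (fun t ht => ?_) (by simpa [I1NumeratorDeriv] using hB)
    have hlin : p * A * t + (p - 2) * B < 0 := by
      nlinarith [mul_neg_of_pos_of_neg (zero_lt_one.trans hp) hA, sub_pos.2 (mem_Ioi.1 ht)]
    exact mul_neg_of_pos_of_neg
      (mul_pos (sub_pos.2 hp) (Real.rpow_pos_of_pos (hpos t (mem_Ici_of_Ioi ht)) _)) hlin
  have hnum_neg : I1Numerator p A B C τ < 0 :=
    neg_of_hasDerivAt_neg (fun t ht => hasDerivAt_I1Numerator p A B C (hpos t ht)) hderiv_neg
      (by simp [I1Numerator]) τ hτ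
  have hτ1 : 0 < τ - 1 := sub_pos.2 hτ
  have hI1 : A * (τ ^ p - 1) / (τ - 1) + B * (τ ^ (p - 1) - 1) / (τ - 1) + C =
      I1Numerator p A B C τ / (τ - 1) := by
    rw [I1Numerator]
    field_simp
  rw [hI1]
  exact div_neg_of_neg_of_pos hnum_neg hτ1

theorem I1_neg (p A B C D : ℝ) (hp : 1 < p) (hsum : A + B + C + D = 0)
    (hA : A < 0) (hB : p * A + (p - 1) * B + C ≤ 0) (hC : p * A + (p - 2) * B ≤ 0) :
    ∀ τ : ℝ, 1 < τ →
      A * (τ ^ p - 1) / (τ - 1) + B * (τ ^ (p - 1) - 1) / (τ - 1) + C < 0 :=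
  I1_neg_general p A B C hp hA hB hC
end

section
/- Let p > 1, A < 0, and pA + (p−2)B ≤ 0 for real numbers A, B. Then the function I₂(τ) = (p−1)A τ^p + (−pA + (p−2)B) τ^{p−1} − (p−1)B τ^{p−2} + A + B satisfies I₂(1) = 0 and I₂'(τ) = (p−1) τ^{p−3} (τ−1)(pAτ + (p−2)B) < 0 for all τ > 1; consequently I₂(τ) < 0 for all τ > 1. -/
/-!
I₂ vanishes at 1, and for τ > 1 its derivative (p-1) τ^(p-3) (τ-1) (pAτ + (p-2)B) is negative
because the linear factor is decreasing in τ (as pA < 0) and is already ≤ 0 at τ = 1.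
Hence I₂ is strictly decreasing on [1, ∞) and negative on (1, ∞).
-/

open Real Set

noncomputable section

namespace I2Neg

def I₂ (p A B τ : ℝ) : ℝ :=
  (p - 1) * A * τ ^ p + (-(p * A) + (p - 2) * B) * τ ^ (p - 1)
    - (p - 1) * B * τ ^ (p - 2) + A + B

variable {p A B τ : ℝ}

theorem I₂_one : I₂ p A B 1 = 0 := by
  simp only [I₂, one_rpow]; ring

theorem hasDerivAt_I₂ (hτ : 0 < τ) :
    HasDerivAt (I₂ p A B) ((p - 1) * τ ^ (p - 3) * (τ - 1) * (p * A * τ + (p - 2) * B)) τ := by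
  have hpow (q : ℝ) : HasDerivAt (fun x : ℝ => x ^ q) (q * τ ^ (q - 1)) τ :=
    hasDerivAt_rpow_const (Or.inl hτ.ne')
  have hsum := ((((hpow p).const_mul ((p - 1) * A)).add
    ((hpow (p - 1)).const_mul (-(p * A) + (p - 2) * B))).sub
    ((hpow (p - 2)).const_mul ((p - 1) * B))).add_const A |>.add_const B
  refine hsum.congr_deriv ?_
  have hshift (q : ℝ) : τ ^ (q + 1) = τ ^ q * τ := rpow_add_one hτ.ne' q
  have e₁ : τ ^ (p - 1 - 1) = τ ^ (p - 3) * τ := by rw [← hshift]; ring_nf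
  have e₂ : τ ^ (p - 1) = τ ^ (p - 3) * τ * τ := by rw [← hshift, ← hshift]; ring_nf
  rw [e₁, e₂, show p - 2 - 1 = p - 3 by ring]
  ring

theorem mul_add_neg_of_one_lt {a b x : ℝ} (ha : a < 0) (hab : a + b ≤ 0) (hx : 1 < x) :
    a * x + b < 0 := by
  nlinarith

theorem deriv_I₂_neg (hp : 1 < p) (hA : A < 0) (hC : p * A + (p - 2) * B ≤ 0)
    (hτ : 1 < τ) : (p - 1) * τ ^ (p - 3) * (τ - 1) * (p * A * τ + (p - 2) * B) < 0 := by
  have hpos : 0 < (p - 1) * τ ^ (p - 3) * (τ - 1) := by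
    have := rpow_pos_of_pos (zero_lt_one.trans hτ) (p - 3)
    have := sub_pos.2 hp
    have := sub_pos.2 hτ
    positivity
  exact mul_neg_of_pos_of_neg hpos
    (mul_add_neg_of_one_lt (mul_neg_of_pos_of_neg (by linarith) hA) hC hτ)

theorem strictAntiOn_I₂ (hp : 1 < p) (hA : A < 0) (hC : p * A + (p - 2) * B ≤ 0) :
    StrictAntiOn (I₂ p A B) (Ici 1) := by
  refine strictAntiOn_of_deriv_neg (convex_Ici 1) (fun x hx => ?_) (fun x hx => ?_)
  · exact (hasDerivAt_I₂ (zero_lt_one.trans_le hx)).continuousAt.continuousWithinAt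
  · rw [interior_Ici] at hx
    rw [(hasDerivAt_I₂ (zero_lt_one.trans hx)).deriv]
    exact deriv_I₂_neg hp hA hC hx

end I2Neg

end

open I2Neg in
theorem I2_neg (p A B : ℝ) (hp : 1 < p) (hA : A < 0) (hC : p * A + (p - 2) * B ≤ 0) :
    (fun τ : ℝ => (p - 1) * A * τ ^ p + (-(p * A) + (p - 2) * B) * τ ^ (p - 1)
        - (p - 1) * B * τ ^ (p - 2) + A + B) 1 = 0 ∧
    (∀ τ : ℝ, 1 < τ →
      deriv (fun τ : ℝ => (p - 1) * A * τ ^ p + (-(p * A) + (p - 2) * B) * τ ^ (p - 1)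
          - (p - 1) * B * τ ^ (p - 2) + A + B) τ
        = (p - 1) * τ ^ (p - 3) * (τ - 1) * (p * A * τ + (p - 2) * B) ∧
      (p - 1) * τ ^ (p - 3) * (τ - 1) * (p * A * τ + (p - 2) * B) < 0) ∧
    (∀ τ : ℝ, 1 < τ →
      (p - 1) * A * τ ^ p + (-(p * A) + (p - 2) * B) * τ ^ (p - 1)
        - (p - 1) * B * τ ^ (p - 2) + A + B < 0) := by
  refine ⟨I₂_one, fun τ hτ => ⟨(hasDerivAt_I₂ (zero_lt_one.trans hτ)).deriv,
    deriv_I₂_neg hp hA hC hτ⟩, fun τ hτ => ?_⟩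
  have := strictAntiOn_I₂ hp hA hC self_mem_Ici hτ.le hτ
  rwa [I₂_one] at this
end
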